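/- Let A ∈ ℝ^{N×N} be symmetric with ‖A‖₂ = λ₀ = |λ₁| and suppose all eigenvalues λ of A with |λ| = ‖A‖₂ have the same sign (say positive). Then for every z̃ ∈ ℝ and every c̃ with 0 < c̃ ≤ (∑_{j=0}^{N-1} (z̃_N^T v_j)²/(λ₀ + λ_j))^{-1}, the rank-1 Hankel matrix c̃·z̃_N·z̃_N^T satisfies ‖A - c̃·z̃_N·z̃_N^T‖₂ = ‖A‖₂. -/

import Mathlib

open Matrix

noncomputable def rzvec (N : ℕ) (z : ℝ) : Fin N → ℝ :=
  fun k => (Real.sqrt (∑ j : Fin N, z ^ (2 * (j : ℕ))))⁻¹ * z ^ (k : ℕ)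

noncomputable def rvnorm {ι : Type*} [Fintype ι] (x : ι → ℝ) : ℝ :=
  Real.sqrt (∑ i, x i ^ 2)

noncomputable def rspecNorm {M N : ℕ} (A : Matrix (Fin M) (Fin N) ℝ) : ℝ :=
  sSup {r : ℝ | ∃ x : Fin N → ℝ, rvnorm x = 1 ∧ r = rvnorm (A.mulVec x)}

/-!
Write `E = A - c • z zᵀ` and `λ₀ = ‖A‖₂`. In the eigenbasis of `A`,
`xᵀAx + λ₀ ‖x‖² = ∑ⱼ (λ₀ + λⱼ) (xᵀvⱼ)²`, and the weighted Cauchy–Schwarz inequality together with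
the bound on `c` gives `c (zᵀx)² ≤` this sum. Hence `-λ₀ ‖x‖² ≤ xᵀEx ≤ xᵀAx ≤ λ₀ ‖x‖²`, and as `E`
is symmetric its norm is the supremum of `|xᵀEx| / ‖x‖²`, so `‖E‖₂ ≤ λ₀`. Conversely `λ₀ = λ₁` is a
multiple eigenvalue, so its eigenspace contains some `w ≠ 0` with `zᵀw = 0`; then `E w = λ₀ w`.
-/

open Finset WithLp

lemma rvnorm_eq_norm_toLp {ι : Type*} [Fintype ι] (x : ι → ℝ) : rvnorm x = ‖toLp 2 x‖ := by
  simp [rvnorm, EuclideanSpace.norm_eq]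

lemma rspecNorm_eq_norm_toEuclideanCLM {n : ℕ} (A : Matrix (Fin n) (Fin n) ℝ) :
    rspecNorm A = ‖toEuclideanCLM (𝕜 := ℝ) A‖ := by
  rw [← ContinuousLinearMap.sSup_sphere_eq_norm, rspecNorm]
  congr 1
  ext r
  constructor
  · rintro ⟨x, hx, rfl⟩
    exact ⟨toLp 2 x, by simpa [rvnorm_eq_norm_toLp] using hx, by simp [rvnorm_eq_norm_toLp]⟩
  · rintro ⟨x, hx, rfl⟩
    exact ⟨ofLp x, by simpa [rvnorm_eq_norm_toLp] using hx, by rw [rvnorm_eq_norm_toLp]; rfl⟩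

lemma Matrix.IsSymm.rspecNorm_le {n : ℕ} {A : Matrix (Fin n) (Fin n) ℝ} (hA : A.IsSymm) {μ : ℝ}
    (hμ : 0 ≤ μ) (h : ∀ x, |x ⬝ᵥ A *ᵥ x| ≤ μ * (x ⬝ᵥ x)) : rspecNorm A ≤ μ := by
  have hT : (toEuclideanCLM (𝕜 := ℝ) A).IsSymmetric :=
    isSymmetric_toEuclideanLin_iff.mpr hA
  rw [rspecNorm_eq_norm_toEuclideanCLM, ContinuousLinearMap.norm_eq_iSup_rayleighQuotient _ hT]
  refine ciSup_le fun x => ?_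
  rcases eq_or_ne x 0 with rfl | hx
  · simpa using hμ
  have hx' : 0 < ‖x‖ ^ 2 := by positivity
  rw [ContinuousLinearMap.rayleighQuotient, abs_div, abs_of_pos hx', div_le_iff₀ hx']
  have hq : (toEuclideanCLM (𝕜 := ℝ) A).reApplyInnerSelf x = ofLp x ⬝ᵥ A *ᵥ ofLp x := by
    rw [ContinuousLinearMap.reApplyInnerSelf_apply, RCLike.re_to_real, real_inner_comm,
      inner_toEuclideanCLM]
  have hn : ‖x‖ ^ 2 = ofLp x ⬝ᵥ ofLp x := by
    rw [← real_inner_self_eq_norm_sq, EuclideanSpace.inner_eq_star_dotProduct]; rfl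
  rw [hq, hn]
  exact h (ofLp x)

lemma abs_le_rspecNorm_of_mulVec_eq_smul {n : ℕ} {A : Matrix (Fin n) (Fin n) ℝ} {w : Fin n → ℝ}
    {μ : ℝ} (hw : w ≠ 0) (h : A *ᵥ w = μ • w) : |μ| ≤ rspecNorm A := by
  have hw' : 0 < ‖toLp 2 w‖ := by simpa using hw
  have := (toEuclideanCLM (𝕜 := ℝ) A).le_opNorm (toLp 2 w)
  rw [toEuclideanCLM_toLp, h, toLp_smul, norm_smul, Real.norm_eq_abs] at this
  rw [rspecNorm_eq_norm_toEuclideanCLM]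
  exact le_of_mul_le_mul_right this hw'

section OrthonormalEigenvectors

variable {ι : Type*} [Fintype ι] [DecidableEq ι] {v : ι → ι → ℝ}

lemma dotProduct_eq_sum_mul_of_orthonormal (horth : ∀ i j, v i ⬝ᵥ v j = if i = j then 1 else 0)
    (x y : ι → ℝ) : x ⬝ᵥ y = ∑ j, (x ⬝ᵥ v j) * (y ⬝ᵥ v j) := by
  set V : Matrix ι ι ℝ := Matrix.of v
  have hVVt : V * Vᵀ = 1 := by
    ext i j
    simpa [V, Matrix.mul_apply, Matrix.one_apply, dotProduct] using horth i j
  calc x ⬝ᵥ y = ((Vᵀ * V) *ᵥ x) ⬝ᵥ y := by rw [mul_eq_one_comm.mp hVVt, one_mulVec]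
    _ = (V *ᵥ x) ⬝ᵥ (V *ᵥ y) := by
      rw [← mulVec_mulVec, mulVec_transpose, ← dotProduct_mulVec]
    _ = ∑ j, (x ⬝ᵥ v j) * (y ⬝ᵥ v j) := by simp_rw [dotProduct_comm x, dotProduct_comm y]; rfl

variable {A : Matrix ι ι ℝ} {lam : ι → ℝ}

lemma dotProduct_mulVec_self_eq_sum (hA : A.IsSymm) (heig : ∀ i, A *ᵥ v i = lam i • v i)
    (horth : ∀ i j, v i ⬝ᵥ v j = if i = j then 1 else 0) (x : ι → ℝ) :
    x ⬝ᵥ A *ᵥ x = ∑ j, lam j * (x ⬝ᵥ v j) ^ 2 := by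
  rw [dotProduct_eq_sum_mul_of_orthonormal horth]
  refine sum_congr rfl fun j _ => ?_
  rw [dotProduct_comm (A *ᵥ x), dotProduct_mulVec, ← mulVec_transpose, hA, heig, smul_dotProduct,
    smul_eq_mul, dotProduct_comm (v j)]
  ring

lemma mul_sq_dotProduct_le_sum (horth : ∀ i j, v i ⬝ᵥ v j = if i = j then 1 else 0) {μ c : ℝ}
    (hpos : ∀ j, 0 < μ + lam j) (hc : 0 ≤ c) {z : ι → ℝ}
    (hcle : c ≤ (∑ j, (z ⬝ᵥ v j) ^ 2 / (μ + lam j))⁻¹) (x : ι → ℝ) :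
    c * (z ⬝ᵥ x) ^ 2 ≤ ∑ j, (μ + lam j) * (x ⬝ᵥ v j) ^ 2 := by
  set S := ∑ j, (z ⬝ᵥ v j) ^ 2 / (μ + lam j)
  set T := ∑ j, (μ + lam j) * (x ⬝ᵥ v j) ^ 2
  have hS : 0 ≤ S := sum_nonneg fun j _ => div_nonneg (sq_nonneg _) (hpos j).le
  have hT : 0 ≤ T := sum_nonneg fun j _ => mul_nonneg (hpos j).le (sq_nonneg _)
  have hcs : (z ⬝ᵥ x) ^ 2 ≤ S * T := by
    rw [dotProduct_eq_sum_mul_of_orthonormal horth]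
    refine sum_sq_le_sum_mul_sum_of_sq_le_mul _ (fun j _ => div_nonneg (sq_nonneg _) (hpos j).le)
      (fun j _ => mul_nonneg (hpos j).le (sq_nonneg _)) fun j _ => le_of_eq ?_
    field_simp [(hpos j).ne']
  -- also when `S = 0`, where `S⁻¹ = 0`
  have hcS : c * S ≤ 1 :=
    (mul_le_mul_of_nonneg_right hcle hS).trans inv_mul_le_one
  calc c * (z ⬝ᵥ x) ^ 2 ≤ c * (S * T) := by gcongr
    _ = (c * S) * T := by ring
    _ ≤ T := mul_le_of_le_one_left hT hcS

lemma abs_dotProduct_sub_smul_vecMulVec_mulVec_le (hA : A.IsSymm)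
    (heig : ∀ i, A *ᵥ v i = lam i • v i) (horth : ∀ i j, v i ⬝ᵥ v j = if i = j then 1 else 0)
    {μ c : ℝ} (hbound : ∀ j, |lam j| ≤ μ) (hpos : ∀ j, 0 < μ + lam j) (hc : 0 ≤ c) {z : ι → ℝ}
    (hcle : c ≤ (∑ j, (z ⬝ᵥ v j) ^ 2 / (μ + lam j))⁻¹) (x : ι → ℝ) :
    |x ⬝ᵥ (A - c • vecMulVec z z) *ᵥ x| ≤ μ * (x ⬝ᵥ x) := by
  have hE : x ⬝ᵥ (A - c • vecMulVec z z) *ᵥ x = x ⬝ᵥ A *ᵥ x - c * (z ⬝ᵥ x) ^ 2 := by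
    rw [sub_mulVec, smul_mulVec, vecMulVec_mulVec, dotProduct_sub, dotProduct_smul,
      op_smul_eq_smul, dotProduct_smul, smul_eq_mul, smul_eq_mul, dotProduct_comm x z]
    ring
  have hAx := dotProduct_mulVec_self_eq_sum hA heig horth x
  have hxx : x ⬝ᵥ x = ∑ j, (x ⬝ᵥ v j) ^ 2 := by
    simpa only [sq] using dotProduct_eq_sum_mul_of_orthonormal horth x x
  have hupper : x ⬝ᵥ A *ᵥ x ≤ μ * (x ⬝ᵥ x) := by
    rw [hAx, hxx, mul_sum]
    gcongr with j
    exact (le_abs_self _).trans (hbound j)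
  have hlower : c * (z ⬝ᵥ x) ^ 2 ≤ x ⬝ᵥ A *ᵥ x + μ * (x ⬝ᵥ x) := by
    rw [hAx, hxx, mul_sum, ← sum_add_distrib]
    simpa only [add_mul, add_comm] using mul_sq_dotProduct_le_sum horth hpos hc hcle x
  rw [hE, abs_le]
  constructor
  · linarith
  · nlinarith [sq_nonneg (z ⬝ᵥ x)]

end OrthonormalEigenvectors

lemma exists_mulVec_eq_smul_dotProduct_eq_zero {ι : Type*} [Fintype ι] {A : Matrix ι ι ℝ}
    {u₀ u₁ : ι → ℝ} {μ : ℝ} (h₀ : A *ᵥ u₀ = μ • u₀) (h₁ : A *ᵥ u₁ = μ • u₁) (hu₀ : u₀ ≠ 0)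
    (hu₁ : u₁ ≠ 0) (h₀₁ : u₀ ⬝ᵥ u₁ = 0) (z : ι → ℝ) :
    ∃ w ≠ 0, A *ᵥ w = μ • w ∧ z ⬝ᵥ w = 0 := by
  by_cases hz : z ⬝ᵥ u₀ = 0
  · exact ⟨u₀, hu₀, h₀, hz⟩
  refine ⟨(z ⬝ᵥ u₁) • u₀ - (z ⬝ᵥ u₀) • u₁, fun hw => ?_, ?_, ?_⟩
  · have := congrArg (· ⬝ᵥ u₁) hw
    simp [sub_dotProduct, smul_dotProduct, h₀₁, dotProduct_self_eq_zero, hz, hu₁] at this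
  · rw [mulVec_sub, mulVec_smul, mulVec_smul, h₀, h₁, smul_comm _ μ, smul_comm _ μ, ← smul_sub]
  · simp only [dotProduct_sub, dotProduct_smul, smul_eq_mul]
    ring

/-- If the largest singular value is multiple (`λ₀ = |λ₁| = ‖A‖₂`) and all
eigenvalues of maximal modulus are positive, then every rank-1 Hankel matrix
`c̃·z̃_N·z̃_Nᵀ` with `0 < c̃ ≤ (∑_j (z̃_Nᵀ v_j)²/(λ₀+λ_j))⁻¹` achieves
`‖A - c̃·z̃_N·z̃_Nᵀ‖₂ = ‖A‖₂`. -/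
theorem stmt14 (N : ℕ) (hN : 2 ≤ N) (A : Matrix (Fin N) (Fin N) ℝ)
    (hsymm : A.IsSymm)
    (lam : Fin N → ℝ) (v : Fin N → Fin N → ℝ)
    (heig : ∀ i, A.mulVec (v i) = lam i • v i)
    (horth : ∀ i j, v i ⬝ᵥ v j = if i = j then (1 : ℝ) else 0)
    (hord : ∀ i j : Fin N, i ≤ j → |lam j| ≤ |lam i|)
    (hlam0 : lam ⟨0, by omega⟩ = rspecNorm A)
    (hmult : |lam ⟨1, by omega⟩| = lam ⟨0, by omega⟩)
    (hsign : ∀ j, |lam j| = lam ⟨0, by omega⟩ → 0 < lam j) :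
    ∀ zt ct : ℝ, 0 < ct →
      ct ≤ (∑ j : Fin N, (rzvec N zt ⬝ᵥ v j) ^ 2 / (lam ⟨0, by omega⟩ + lam j))⁻¹ →
      rspecNorm (A - ct • vecMulVec (rzvec N zt) (rzvec N zt)) = rspecNorm A := by
  intro zt ct hct hle
  set i₀ : Fin N := ⟨0, by omega⟩
  set i₁ : Fin N := ⟨1, by omega⟩
  have hv : ∀ i, v i ≠ 0 := fun i hi => by simpa [hi] using horth i i
  have hl₁ : lam i₁ = lam i₀ := by rw [← hmult, abs_of_pos (hsign _ hmult)]
  have hl₀ : 0 ≤ lam i₀ := hmult ▸ abs_nonneg _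
  have hbound : ∀ j, |lam j| ≤ lam i₀ := fun j => abs_of_nonneg hl₀ ▸ hord i₀ j (Nat.zero_le _)
  have hpos : ∀ j, 0 < lam i₀ + lam j := by
    intro j
    by_contra! hj
    have hj' : lam j = -lam i₀ := by linarith [neg_abs_le (lam j), hbound j]
    linarith [hsign j (by rw [hj', abs_neg, abs_of_nonneg hl₀])]
  obtain ⟨w, hw, hAw, hzw⟩ := exists_mulVec_eq_smul_dotProduct_eq_zero (heig i₀)
    (hl₁ ▸ heig i₁) (hv i₀) (hv i₁) (by simp [horth, i₀, i₁]) (rzvec N zt)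
  have hzz : (vecMulVec (rzvec N zt) (rzvec N zt)).IsSymm := transpose_vecMulVec _ _
  rw [← hlam0]
  refine le_antisymm ((hsymm.sub (hzz.smul ct)).rspecNorm_le hl₀
    (abs_dotProduct_sub_smul_vecMulVec_mulVec_le hsymm heig horth hbound hpos hct.le hle)) ?_
  have hEw : (A - ct • vecMulVec (rzvec N zt) (rzvec N zt)) *ᵥ w = lam i₀ • w := by
    rw [sub_mulVec, smul_mulVec, vecMulVec_mulVec, hzw, hAw]
    simp
  simpa [abs_of_nonneg hl₀] using abs_le_rspecNorm_of_mulVec_eq_smul hw hEw
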